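/- For x ∈ ℝⁿ with all coordinates nonzero and n := ‖x‖_p, the diagonal partial derivative of HNTanh is ∂yᵢ/∂xᵢ = tanh(n)/n + |xᵢ|^p · ((n(1 − tanh²(n)) − tanh(n))/n²) · n^{1−p}. -/

import Mathlib

/-!
Along the `i`-th coordinate line, `n(t) = (|t|^p + c)^(1/p)` with `c ≥ 0` constant, so
`∂n/∂xᵢ = |xᵢ|^(p-2) xᵢ n^(1-p)` and hence `xᵢ ∂n/∂xᵢ = |xᵢ|^p n^(1-p)`. The formula is then the
quotient and chain rules for `xᵢ / n · tanh n`, with `tanh' = 1 - tanh²`.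
-/

/-- The `p`-norm `‖x‖_p = (Σₗ |xₗ|^p)^(1/p)` on `ℝᵐ`. -/
noncomputable def pnorm (p : ℝ) {m : ℕ} (x : Fin m → ℝ) : ℝ :=
  (∑ l, |x l| ^ p) ^ (1 / p)

open Function Finset

theorem Real.hasDerivAt_tanh (x : ℝ) : HasDerivAt tanh (1 - tanh x ^ 2) x := by
  have h := (hasDerivAt_sinh x).div (hasDerivAt_cosh x) (cosh_pos x).ne'
  rw [show tanh = fun t => sinh t / cosh t from funext tanh_eq_sinh_div_cosh]
  refine h.congr_deriv ?_
  field_simp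

theorem Finset.sum_comp_update {ι α M : Type*} [Fintype ι] [DecidableEq ι] [AddCommMonoid M]
    (g : α → M) (x : ι → α) (i : ι) (a : α) :
    ∑ l, g (update x i a l) = g a + ∑ l ∈ univ.erase i, g (x l) := by
  simp_rw [apply_update (fun _ => g), sum_update_of_mem (mem_univ i), sdiff_singleton_eq_erase]

theorem Real.abs_rpow_sub_two_mul_self_mul_self {p : ℝ} (hp : p ≠ 0) (x : ℝ) :
    |x| ^ (p - 2) * x * x = |x| ^ p := by
  rw [mul_assoc, ← abs_mul_abs_self, ← sq, ← rpow_two, ← Real.rpow_add' (abs_nonneg x) (by simpa)]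
  ring_nf

theorem pnorm_pos {m : ℕ} {p : ℝ} {x : Fin m → ℝ} {k : Fin m} (hk : x k ≠ 0) :
    0 < pnorm p x :=
  Real.rpow_pos_of_pos (sum_pos' (fun l _ => by positivity) ⟨k, mem_univ k, by positivity⟩) _

theorem hasDerivAt_pnorm_update {m : ℕ} {p : ℝ} (hp : 1 < p) (x : Fin m → ℝ) (i : Fin m)
    (hpos : 0 < pnorm p x) :
    HasDerivAt (fun t => pnorm p (update x i t))
      (|x i| ^ (p - 2) * x i * pnorm p x ^ (1 - p)) (x i) := by
  set c := ∑ l ∈ univ.erase i, |x l| ^ p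
  have hS : ∑ l, |x l| ^ p = |x i| ^ p + c := by
    rw [← sum_comp_update (fun y : ℝ => |y| ^ p), update_eq_self]
  have hS_pos : 0 < |x i| ^ p + c := by
    rw [← hS]
    refine lt_of_le_of_ne (sum_nonneg fun l _ => by positivity) fun h => hpos.ne' ?_
    rw [pnorm, ← h, Real.zero_rpow (by positivity)]
  have h := (Real.hasDerivAt_rpow_const (p := 1 / p) (Or.inl hS_pos.ne')).comp (x i)
    ((hasDerivAt_abs_rpow (x i) hp).add_const c)
  simp only [pnorm, sum_comp_update (fun y : ℝ => |y| ^ p), hS]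
  refine h.congr_deriv ?_
  rw [← Real.rpow_mul hS_pos.le]
  field_simp

/-- Diagonal partial derivative of HNTanh: at a point `x` with all coordinates
nonzero, writing `n = ‖x‖_p`, the `i`-th component `yᵢ = (xᵢ/‖x‖_p) tanh ‖x‖_p`
satisfies
`∂yᵢ/∂xᵢ = tanh(n)/n + |xᵢ|^p ((n(1 − tanh²n) − tanh n)/n²) n^{1−p}`. -/
theorem hntanh_diag_partial (m : ℕ) (p : ℝ) (hp : 1 < p)
    (x : Fin m → ℝ) (hx : ∀ k, x k ≠ 0) (i : Fin m) :
    HasDerivAt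
      (fun t : ℝ =>
        (Function.update x i t i / pnorm p (Function.update x i t)) *
          Real.tanh (pnorm p (Function.update x i t)))
      (Real.tanh (pnorm p x) / pnorm p x +
        |x i| ^ p *
          ((pnorm p x * (1 - Real.tanh (pnorm p x) ^ 2) - Real.tanh (pnorm p x)) /
            (pnorm p x) ^ 2) * (pnorm p x) ^ (1 - p))
      (x i) := by
  have hn : 0 < pnorm p x := pnorm_pos (hx i)
  have hN := hasDerivAt_pnorm_update hp x i hn
  have h := ((hasDerivAt_id (x i)).div hN (by rw [update_eq_self]; exact hn.ne')).mul
    ((Real.hasDerivAt_tanh _).comp (x i) hN)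
  simp only [update_eq_self, id, Pi.div_apply, comp_apply] at h
  simp only [update_self]
  refine h.congr_deriv ?_
  rw [← Real.abs_rpow_sub_two_mul_self_mul_self (by linarith : p ≠ 0) (x i)]
  field_simp
  ring
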